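/- arXiv:2505.05404 — 3 statements merged into one kernel-verified Lean document; each statement's English description precedes it below -/
import Mathlib

section
/- Let h : (ℝ³)ⁿ → ℝ³ be O(3)-equivariant, i.e. h(Q r₁, …, Q rₙ) = Q h(r₁, …, rₙ) for every orthogonal matrix Q. Then for every input (r₁, …, rₙ), the value h(r₁, …, rₙ) lies in the linear span of {r₁, …, rₙ}. -/
/-!
The reflection in the span `K` of the `rᵢ` is an orthogonal map fixing every `rᵢ`, so by
equivariance it fixes `h r`; but the fixed vectors of that reflection are exactly `K`.
-/

open Matrix

section
variable {𝕜 E ι : Type*} [RCLike 𝕜] [NormedAddCommGroup E] [InnerProductSpace 𝕜 E] [Finite ι]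


theorem mem_span_range_of_linearIsometryEquiv_equivariant (h : (ι → E) → E)
    (hequiv : ∀ (Q : E ≃ₗᵢ[𝕜] E) (r : ι → E), h (Q ∘ r) = Q (h r)) (r : ι → E) :
    h r ∈ Submodule.span 𝕜 (Set.range r) := by
  set K := Submodule.span 𝕜 (Set.range r)
  have : FiniteDimensional 𝕜 K := FiniteDimensional.span_of_finite 𝕜 (Set.finite_range r)
  have hfix : K.reflection ∘ r = r :=
    funext fun i => K.reflection_mem_subspace_eq_self (Submodule.subset_span ⟨i, rfl⟩)
  rw [← K.reflection_eq_self_iff, ← hequiv, hfix]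

end

namespace Matrix
variable {𝕜 n : Type*} [RCLike 𝕜] [Fintype n] [DecidableEq n]


theorem toEuclideanCLM_symm_mem_unitaryGroup
    (Q : EuclideanSpace 𝕜 n ≃ₗᵢ[𝕜] EuclideanSpace 𝕜 n) :
    (toEuclideanCLM (𝕜 := 𝕜) (n := n)).symm (Q : EuclideanSpace 𝕜 n →L[𝕜] EuclideanSpace 𝕜 n) ∈
      unitaryGroup n 𝕜 :=
  Unitary.map_mem (toEuclideanCLM (𝕜 := 𝕜) (n := n)).symm (Unitary.linearIsometryEquiv.symm Q).2

theorem toEuclideanCLM_symm_mulVec (Q : EuclideanSpace 𝕜 n →L[𝕜] EuclideanSpace 𝕜 n) (x : n → 𝕜) :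
    (toEuclideanCLM (𝕜 := 𝕜) (n := n)).symm Q *ᵥ x = WithLp.ofLp (Q (WithLp.toLp 2 x)) := by
  conv_rhs => rw [← toEuclideanCLM.apply_symm_apply Q]
  rfl

end Matrix

theorem equivariant_vector_in_span {n : ℕ}
    (h : (Fin n → Fin 3 → ℝ) → (Fin 3 → ℝ))
    (hequiv : ∀ Q ∈ Matrix.orthogonalGroup (Fin 3) ℝ, ∀ r : Fin n → Fin 3 → ℝ,
      h (fun i => Q.mulVec (r i)) = Q.mulVec (h r)) :
    ∀ r : Fin n → Fin 3 → ℝ, h r ∈ Submodule.span ℝ (Set.range r) := by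
  intro r
  have hequiv' : ∀ (Q : EuclideanSpace ℝ (Fin 3) ≃ₗᵢ[ℝ] EuclideanSpace ℝ (Fin 3)) s,
      WithLp.toLp 2 (h (WithLp.ofLp ∘ Q ∘ s)) = Q (WithLp.toLp 2 (h (WithLp.ofLp ∘ s))) := by
    intro Q s
    have := hequiv _ (toEuclideanCLM_symm_mem_unitaryGroup Q) (WithLp.ofLp ∘ s)
    simp only [toEuclideanCLM_symm_mulVec, Function.comp_apply, WithLp.toLp_ofLp] at this
    exact congrArg (WithLp.toLp 2) this
  have hspan := Submodule.apply_mem_span_image_of_mem_span (WithLp.linearEquiv 2 ℝ _).toLinearMap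
    (mem_span_range_of_linearIsometryEquiv_equivariant
      (fun s => WithLp.toLp 2 (h (WithLp.ofLp ∘ s))) hequiv' (WithLp.toLp 2 ∘ r))
  simpa [← Set.range_comp, Function.comp_def] using hspan
end

section
/- Let h : (ℝ³)ⁿ → ℝ³ satisfy h(Q r₁, …, Q rₙ) = det(Q) · Q h(r₁, …, rₙ) for all Q ∈ O(3) (i.e. h is a pseudovector-valued equivariant function). Then for every input, h(r₁, …, rₙ) lies in the linear span of the cross products {rᵢ × rⱼ : 1 ≤ i, j ≤ n}. -/
/-!
Let `v` be orthogonal to every `rᵢ × rⱼ`; it suffices to show `v ⬝ h r = 0`. There is a nonzero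
`w` orthogonal to `v` and to every `rᵢ`: take `w = v × rᵢ` if one of these is nonzero, and
otherwise all `rᵢ` are parallel to `v` and any nonzero `v × x` will do. The reflection in `w⊥`
fixes every `rᵢ` and has determinant `-1`, so it sends `h r` to `-h r`; hence `h r` is parallel
to `w` and therefore orthogonal to `v`.
-/

open Matrix

section Householder

variable {ι : Type*} [Fintype ι] [DecidableEq ι]

noncomputable def householderMatrix (w : ι → ℝ) : Matrix ι ι ℝ :=
  1 - (2 / (w ⬝ᵥ w)) • vecMulVec w w

lemma householderMatrix_mulVec (w x : ι → ℝ) :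
    householderMatrix w *ᵥ x = x - (2 / (w ⬝ᵥ w) * (w ⬝ᵥ x)) • w := by
  rw [householderMatrix, sub_mulVec, one_mulVec, smul_mulVec, vecMulVec_mulVec, op_smul_eq_smul,
    smul_smul]

lemma transpose_householderMatrix (w : ι → ℝ) : (householderMatrix w)ᵀ = householderMatrix w := by
  rw [householderMatrix, transpose_sub, transpose_one, transpose_smul, transpose_vecMulVec]

lemma householderMatrix_mul_self {w : ι → ℝ} (hw : w ≠ 0) :
    householderMatrix w * householderMatrix w = 1 := by
  have hww : w ⬝ᵥ w ≠ 0 := fun h => hw (dotProduct_self_eq_zero.mp h)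
  simp only [householderMatrix, sub_mul, mul_sub, one_mul, mul_one, smul_mul, Matrix.mul_smul,
    vecMulVec_mul_vecMulVec, vecMulVec_smul, smul_smul]
  rw [show 2 / (w ⬝ᵥ w) * (2 / (w ⬝ᵥ w) * (w ⬝ᵥ w)) = 2 * (2 / (w ⬝ᵥ w)) by field_simp]
  module

lemma householderMatrix_mem_orthogonalGroup {w : ι → ℝ} (hw : w ≠ 0) :
    householderMatrix w ∈ orthogonalGroup ι ℝ := by
  rw [mem_orthogonalGroup_iff, transpose_householderMatrix, householderMatrix_mul_self hw]

lemma det_householderMatrix {w : ι → ℝ} (hw : w ≠ 0) : (householderMatrix w).det = -1 := by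
  have hww : w ⬝ᵥ w ≠ 0 := fun h => hw (dotProduct_self_eq_zero.mp h)
  rw [householderMatrix, sub_eq_add_neg, ← neg_smul, ← smul_vecMulVec, vecMulVec_eq Unit,
    det_one_add_replicateCol_mul_replicateRow, dotProduct_smul, smul_eq_mul]
  field_simp
  ring

end Householder

lemma mem_of_forall_dotProduct_eq_zero {K ι : Type*} [Field K] [Fintype ι] [DecidableEq ι]
    {p : Submodule K (ι → K)} {x : ι → K} (hx : ∀ v, (∀ y ∈ p, v ⬝ᵥ y = 0) → v ⬝ᵥ x = 0) :
    x ∈ p := by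
  by_contra hxp
  obtain ⟨f, hfx, hpf⟩ := Submodule.exists_le_ker_of_notMem hxp
  have hf : ∀ y, (dotProductEquiv K ι).symm f ⬝ᵥ y = f y := fun y =>
    congr($((dotProductEquiv K ι).apply_symm_apply f) y)
  exact hfx (by rw [← hf]; exact hx _ fun y hy => (hf y).trans (hpf hy))

section CrossProduct

variable {R α : Type*} [CommRing R]

lemma exists_cross_ne_zero {v : Fin 3 → R} (hv : v ≠ 0) : ∃ x, v ⨯₃ x ≠ 0 := by
  by_contra! hvx
  obtain ⟨h₂, h₁⟩ : v 2 = 0 ∧ v 1 = 0 := by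
    simpa [cross_apply, funext_iff, Fin.forall_fin_succ] using hvx ![1, 0, 0]
  obtain ⟨-, h₀⟩ : v 2 = 0 ∧ v 0 = 0 := by
    simpa [cross_apply, funext_iff, Fin.forall_fin_succ] using hvx ![0, 1, 0]
  exact hv (by ext k; fin_cases k <;> assumption)

lemma exists_ne_zero_orthogonal_of_dotProduct_cross_eq_zero {r : α → Fin 3 → R} {v : Fin 3 → R}
    (hv : v ≠ 0) (hvr : ∀ i j, v ⬝ᵥ r i ⨯₃ r j = 0) :
    ∃ w ≠ 0, w ⬝ᵥ v = 0 ∧ ∀ i, w ⬝ᵥ r i = 0 := by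
  suffices ∃ x, v ⨯₃ x ≠ 0 ∧ ∀ i, r i ⬝ᵥ v ⨯₃ x = 0 from
    let ⟨x, hx, hxr⟩ := this
    ⟨v ⨯₃ x, hx, by rw [dotProduct_comm, dot_self_cross], fun i => by rw [dotProduct_comm, hxr i]⟩
  by_cases hr : ∃ i, v ⨯₃ r i ≠ 0
  · obtain ⟨i₀, hi₀⟩ := hr
    exact ⟨r i₀, hi₀, fun i => by rw [triple_product_permutation, hvr i₀ i]⟩
  · push Not at hr
    obtain ⟨x, hx⟩ := exists_cross_ne_zero hv
    refine ⟨x, hx, fun i => ?_⟩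
    rw [triple_product_permutation, triple_product_permutation, ← cross_anticomm, hr i, neg_zero,
      dotProduct_zero]

end CrossProduct

section Pseudovector

variable {ι α : Type*} [Fintype ι] [DecidableEq ι]

def IsPseudovectorEquivariant (h : (α → ι → ℝ) → (ι → ℝ)) : Prop :=
  ∀ Q ∈ orthogonalGroup ι ℝ, ∀ r : α → ι → ℝ, h (fun i => Q.mulVec (r i)) = Q.det • Q.mulVec (h r)

lemma IsPseudovectorEquivariant.mem_span_singleton {h : (α → ι → ℝ) → (ι → ℝ)}
    (hh : IsPseudovectorEquivariant h) {r : α → ι → ℝ} {w : ι → ℝ} (hw : w ≠ 0)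
    (hwr : ∀ i, w ⬝ᵥ r i = 0) : h r ∈ ℝ ∙ w := by
  have hfix : (fun i => householderMatrix w *ᵥ r i) = r := by
    ext1 i
    simp [householderMatrix_mulVec, hwr i]
  have key := hh _ (householderMatrix_mem_orthogonalGroup hw) r
  rw [hfix, det_householderMatrix hw, householderMatrix_mulVec] at key
  refine Submodule.mem_span_singleton.mpr ⟨1 / (w ⬝ᵥ w) * (w ⬝ᵥ h r), ?_⟩
  linear_combination (norm := module) (-1 / 2 : ℝ) • key

end Pseudovector

theorem pseudovector_equivariant_in_span_of_crossProducts {n : ℕ}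
    (h : (Fin n → Fin 3 → ℝ) → (Fin 3 → ℝ))
    (hequiv : ∀ Q ∈ Matrix.orthogonalGroup (Fin 3) ℝ, ∀ r : Fin n → Fin 3 → ℝ,
      h (fun i => Q.mulVec (r i)) = Q.det • Q.mulVec (h r)) :
    ∀ r : Fin n → Fin 3 → ℝ,
      h r ∈ Submodule.span ℝ {v : Fin 3 → ℝ | ∃ i j : Fin n, v = crossProduct (r i) (r j)} := by
  intro r
  refine mem_of_forall_dotProduct_eq_zero fun v hv => ?_
  rcases eq_or_ne v 0 with rfl | hv0
  · exact zero_dotProduct _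
  have hvr : ∀ i j, v ⬝ᵥ r i ⨯₃ r j = 0 := fun i j => hv _ (Submodule.subset_span ⟨i, j, rfl⟩)
  obtain ⟨w, hw, hwv, hwr⟩ := exists_ne_zero_orthogonal_of_dotProduct_cross_eq_zero hv0 hvr
  obtain ⟨c, hc⟩ := Submodule.mem_span_singleton.mp
    (IsPseudovectorEquivariant.mem_span_singleton hequiv hw hwr)
  rw [← hc, dotProduct_smul, dotProduct_comm, hwv, smul_zero]
end

section
/- Let h : (ℝ³)ⁿ → ℝ³ be O(3)-equivariant and invariant under every permutation of its n arguments. Then there exists a function f : ℝ³ × (multisets of size n−1 of ℝ³) → ℝ such that h(r₁,…,rₙ) = Σᵢ f(rᵢ, {rⱼ : j ≠ i}) rᵢ, where f is a scalar function invariant under permutations of its second (multiset) argument. -/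
/-!
The orthogonal reflection through `span {rᵢ}` fixes every `rᵢ`, so by equivariance it fixes
`h r`, which therefore lies in that span. By permutation invariance `h r` depends only on the
multiset `S` of the `rᵢ`, so its coefficients on the distinct values `w ∈ S` can be chosen as
functions of `S` alone. Dividing the coefficient of `w` by its multiplicity in `S` spreads it
evenly over the indices `i` with `rᵢ = w`, and `S` is recovered from `rᵢ` and `{rⱼ : j ≠ i}`.
-/

open Matrix Finset

theorem Submodule.exists_mem_orthogonalGroup_mulVec_eq_self_iff {m : Type*} [Fintype m]
    [DecidableEq m] (K : Submodule ℝ (m → ℝ)) :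
    ∃ Q ∈ orthogonalGroup m ℝ, ∀ x : m → ℝ, Q *ᵥ x = x ↔ x ∈ K := by
  let K₂ := K.comap (WithLp.linearEquiv 2 ℝ (m → ℝ)).toLinearMap
  let b := (EuclideanSpace.basisFun m ℝ).toBasis
  let Q := LinearMap.toMatrix b b K₂.reflection.toLinearEquiv.toLinearMap
  have hQ : ∀ x, Q *ᵥ x = WithLp.ofLp (K₂.reflection (WithLp.toLp 2 x)) := fun x => by
    change WithLp.ofLp (toLin b b Q (WithLp.toLp 2 x)) = _
    rw [toLin_toMatrix]
    rfl
  refine ⟨Q, K₂.reflection.toMatrix_mem_unitaryGroup _ _, fun x => ?_⟩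
  rw [hQ, ← (WithLp.toLp_injective 2).eq_iff, WithLp.toLp_ofLp, K₂.reflection_eq_self_iff]
  rfl

theorem mem_span_range_of_orthogonal_equivariant {ι m : Type*} [Fintype m] [DecidableEq m]
    {h : (ι → m → ℝ) → (m → ℝ)}
    (hequiv : ∀ Q ∈ orthogonalGroup m ℝ, ∀ r : ι → m → ℝ,
      h (fun i => Q *ᵥ r i) = Q *ᵥ h r)
    (r : ι → m → ℝ) : h r ∈ Submodule.span ℝ (Set.range r) := by
  obtain ⟨Q, hQ, hfix⟩ :=
    (Submodule.span ℝ (Set.range r)).exists_mem_orthogonalGroup_mulVec_eq_self_iff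
  have hr : (fun i => Q *ᵥ r i) = r :=
    funext fun i => (hfix (r i)).2 (Submodule.subset_span ⟨i, rfl⟩)
  rw [← hfix, ← hequiv Q hQ, hr]

theorem Fintype.exists_perm_eq_comp_of_map_univ_eq {ι α : Type*} [Fintype ι] {r r' : ι → α}
    (hrr' : univ.val.map r = univ.val.map r') : ∃ σ : Equiv.Perm ι, r = r' ∘ σ := by
  classical
  have hcard (a : α) : Fintype.card {i // r i = a} = Fintype.card {i // r' i = a} := by
    simpa [Multiset.count_map, Fintype.card_subtype, Finset.card_def, eq_comm]
      using congrArg (Multiset.count a) hrr'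
  let e (a : α) : {i // r i = a} ≃ {i // r' i = a} := Fintype.equivOfCardEq (hcard a)
  exact ⟨Equiv.ofFiberEquiv e, funext fun i => (Equiv.ofFiberEquiv_map e i).symm⟩

theorem Finset.univ_val_map_eq_cons_map_erase {ι α : Type*} [Fintype ι] [DecidableEq ι]
    (r : ι → α) (i : ι) : univ.val.map r = r i ::ₘ (univ.erase i).val.map r := by
  rw [← Multiset.map_cons, Finset.erase_val, Multiset.cons_erase (mem_univ i)]

theorem exists_multiset_coeffs_of_perm_invariant {ι R M : Type*} [Fintype ι] [Semiring R]
    [AddCommMonoid M] [Module R M] [DecidableEq M] {F : (ι → M) → M}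
    (hspan : ∀ r, F r ∈ Submodule.span R (Set.range r))
    (hperm : ∀ (σ : Equiv.Perm ι) r, F (r ∘ σ) = F r) :
    ∃ g : Multiset M → M → R,
      ∀ r, F r = ∑ w ∈ (univ.val.map r).toFinset, g (univ.val.map r) w • w := by
  have (S : Multiset M) :
      ∃ c : M → R, ∀ r, univ.val.map r = S → F r = ∑ w ∈ S.toFinset, c w • w := by
    by_cases hS : ∃ r₀ : ι → M, univ.val.map r₀ = S
    · obtain ⟨r₀, rfl⟩ := hS
      have hrange : Set.range r₀ = ↑(univ.val.map r₀).toFinset := by ext; simp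
      obtain ⟨c, -, hc⟩ := Submodule.mem_span_finset.1 (hrange ▸ hspan r₀)
      refine ⟨c, fun r hr => ?_⟩
      obtain ⟨σ, rfl⟩ := Fintype.exists_perm_eq_comp_of_map_univ_eq hr
      rw [hperm, hc]
    · exact ⟨0, fun r hr => absurd ⟨r, hr⟩ hS⟩
  choose g hg using this
  exact ⟨g, fun r => hg _ r rfl⟩

theorem sum_div_count_smul_eq_sum_toFinset {ι K M : Type*} [Fintype ι] [Field K]
    [CharZero K] [AddCommGroup M] [Module K M] [DecidableEq M] (r : ι → M) (c : M → K) :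
    ∑ i, (c (r i) / (univ.val.map r).count (r i)) • r i
      = ∑ w ∈ (univ.val.map r).toFinset, c w • w := by
  set S := univ.val.map r
  have hsum : ∑ i, (c (r i) / S.count (r i)) • r i
      = (S.map fun w => (c w / S.count w) • w).sum := by
    rw [Multiset.map_map]; rfl
  rw [hsum, Finset.sum_multiset_map_count]
  refine sum_congr rfl fun w hw => ?_
  have hcount : (S.count w : K) ≠ 0 :=
    Nat.cast_ne_zero.2 (Multiset.count_ne_zero.2 (Multiset.mem_toFinset.1 hw))
  rw [← Nat.cast_smul_eq_nsmul K, smul_smul, mul_div_cancel₀ _ hcount]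

theorem permutation_invariant_equivariant_vector_repr {n : ℕ}
    (h : (Fin n → Fin 3 → ℝ) → (Fin 3 → ℝ))
    (hequiv : ∀ Q ∈ Matrix.orthogonalGroup (Fin 3) ℝ, ∀ r : Fin n → Fin 3 → ℝ,
      h (fun i => Q.mulVec (r i)) = Q.mulVec (h r))
    (hperm : ∀ σ : Equiv.Perm (Fin n), ∀ r : Fin n → Fin 3 → ℝ, h (r ∘ σ) = h r) :
    ∃ f : (Fin 3 → ℝ) → Multiset (Fin 3 → ℝ) → ℝ,
      ∀ r : Fin n → Fin 3 → ℝ,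
        h r = ∑ i : Fin n, f (r i) (Multiset.map r (Finset.univ.erase i).val) • r i := by
  obtain ⟨g, hg⟩ := exists_multiset_coeffs_of_perm_invariant
    (mem_span_range_of_orthogonal_equivariant hequiv) hperm
  refine ⟨fun v M => g (v ::ₘ M) v / (v ::ₘ M).count v, fun r => ?_⟩
  simp_rw [← univ_val_map_eq_cons_map_erase]
  rw [hg, sum_div_count_smul_eq_sum_toFinset]
end
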